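/- arXiv:2402.02314 — 2 statements merged into one kernel-verified Lean document; each statement's English description precedes it below -/
import Mathlib

section
/- Let B, E, D_l, β be positive reals and define g(x) = log(B/(D_l + exp(βx)) + E). Then the second derivative g′′(x) is negative for 0 < x < x₀ and positive for x > x₀, where x₀ = log(D_l² + B·D_l/E)/(2β), provided x₀ > 0. -/
/-! With `u = exp (β x)`, the quotient rule gives
`g'' x = B E β² u / ((Dl + u) (B + E (Dl + u)))² * (u² - (Dl² + B Dl / E))`.
The first factor is positive, and `u² = exp (2 β x)` increases strictly through
`Dl² + B Dl / E = exp (2 β x₀)`, so `g''` changes sign from negative to positive at `x₀`. -/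

open Real

namespace RectifiedScalingLaw

variable {B E Dl β : ℝ}

theorem hasDerivAt_log_div_add_exp (hB : 0 < B) (hE : 0 < E) (hDl : 0 < Dl) (x : ℝ) :
    HasDerivAt (fun x => log (B / (Dl + exp (β * x)) + E))
      (-(B * β * exp (β * x)) / ((Dl + exp (β * x)) * (B + E * (Dl + exp (β * x))))) x := by
  have hD : HasDerivAt (fun x => Dl + exp (β * x)) (exp (β * x) * β) x := by
    simpa using ((hasDerivAt_id x).const_mul β).exp.const_add Dl
  have hlog := (((hasDerivAt_const x B).fun_div hD (by positivity)).add_const E).log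
    (by positivity : B / (Dl + exp (β * x)) + E ≠ 0)
  convert hlog using 1
  field_simp
  ring

theorem deriv_log_div_add_exp (hB : 0 < B) (hE : 0 < E) (hDl : 0 < Dl) :
    deriv (fun x => log (B / (Dl + exp (β * x)) + E)) =
      fun x => -(B * β * exp (β * x)) / ((Dl + exp (β * x)) * (B + E * (Dl + exp (β * x)))) :=
  funext fun x => (hasDerivAt_log_div_add_exp hB hE hDl x).deriv

theorem deriv_deriv_log_div_add_exp (hB : 0 < B) (hE : 0 < E) (hDl : 0 < Dl) (x : ℝ) :
    deriv (deriv (fun x => log (B / (Dl + exp (β * x)) + E))) x =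
      B * E * β ^ 2 * exp (β * x) / ((Dl + exp (β * x)) * (B + E * (Dl + exp (β * x)))) ^ 2 *
        (exp (β * x) ^ 2 - (Dl ^ 2 + B * Dl / E)) := by
  rw [deriv_log_div_add_exp hB hE hDl]
  have hu : HasDerivAt (fun x => exp (β * x)) (exp (β * x) * β) x := by
    simpa using ((hasDerivAt_id x).const_mul β).exp
  have hD := hu.const_add Dl
  have hq : HasDerivAt (fun x => -(B * β * exp (β * x)) /
      ((Dl + exp (β * x)) * (B + E * (Dl + exp (β * x))))) _ x :=
    (hu.const_mul (B * β)).fun_neg.fun_div (hD.mul ((hD.const_mul E).const_add B)) (by positivity)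
  rw [hq.deriv]
  field_simp
  ring

end RectifiedScalingLaw

open RectifiedScalingLaw

theorem stmt_5_general (B E Dl β : ℝ) (hB : 0 < B) (hE : 0 < E) (hDl : 0 < Dl) (hβ : 0 < β)
    (x₀ : ℝ) (hx₀ : x₀ = Real.log (Dl ^ 2 + B * Dl / E) / (2 * β)) :
    ∀ x : ℝ,
      (0 < x → x < x₀ →
        deriv (deriv (fun x => Real.log (B / (Dl + Real.exp (β * x)) + E))) x < 0) ∧
      (x₀ < x →
        0 < deriv (deriv (fun x => Real.log (B / (Dl + Real.exp (β * x)) + E))) x) := by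
  have hthreshold : Dl ^ 2 + B * Dl / E = exp (β * x₀) ^ 2 := by
    have h2βx₀ : 2 * (β * x₀) = log (Dl ^ 2 + B * Dl / E) := by
      rw [hx₀]
      field_simp
    rw [← exp_nat_mul, Nat.cast_ofNat, h2βx₀, exp_log (by positivity)]
  have hsq_lt {y z : ℝ} (h : y < z) : exp (β * y) ^ 2 < exp (β * z) ^ 2 := by
    gcongr
  intro x
  rw [deriv_deriv_log_div_add_exp hB hE hDl, hthreshold]
  have hfactor : 0 < B * E * β ^ 2 * exp (β * x) /
      ((Dl + exp (β * x)) * (B + E * (Dl + exp (β * x)))) ^ 2 := by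
    positivity
  exact ⟨fun _ hx => mul_neg_of_pos_of_neg hfactor (sub_neg.mpr (hsq_lt hx)),
    fun hx => mul_pos hfactor (sub_pos.mpr (hsq_lt hx))⟩

theorem stmt_5 (B E Dl β : ℝ) (hB : 0 < B) (hE : 0 < E) (hDl : 0 < Dl) (hβ : 0 < β)
    (x₀ : ℝ) (hx₀ : x₀ = Real.log (Dl ^ 2 + B * Dl / E) / (2 * β)) (hx₀pos : 0 < x₀) :
    ∀ x : ℝ,
      (0 < x → x < x₀ →
        deriv (deriv (fun x => Real.log (B / (Dl + Real.exp (β * x)) + E))) x < 0) ∧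
      (x₀ < x →
        0 < deriv (deriv (fun x => Real.log (B / (Dl + Real.exp (β * x)) + E))) x) :=
  stmt_5_general B E Dl β hB hE hDl hβ x₀ hx₀
end

section
/- Let B, E, D_l, β > 0 and g(x) = log(B/(D_l + exp(βx)) + E). If D_l² + B·D_l/E > 1, then there exists a point x₀ > 0 at which g changes from strictly concave to strictly convex; in particular g is not convex on (0, ∞). -/
/-!
With `C = B + E * Dl`, the function is `log (E * exp (β * x) + C) - log (exp (β * x) + Dl)`.
Since `t ↦ log (a * exp (β * t) + c)` has second derivative `β² a c exp (β t) / (a exp (β t) + c)²`,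
the second derivative of the difference factors as a positive quantity times
`exp (β * x) ^ 2 - K`, where `K = Dl ^ 2 + B * Dl / E`. It therefore changes sign exactly at
`x₀ = log K / (2 * β)`, which is positive precisely when `K > 1`.
-/

open Real Set

theorem StrictConcaveOn.not_convexOn {𝕜 E β : Type*} [Field 𝕜] [LinearOrder 𝕜]
    [IsStrictOrderedRing 𝕜] [AddCommMonoid E] [SMul 𝕜 E] [AddCommMonoid β] [PartialOrder β]
    [SMul 𝕜 β] {s t : Set E} {f : E → β} (hf : StrictConcaveOn 𝕜 s f) (hs : s.Nontrivial)
    (hst : s ⊆ t) : ¬ ConvexOn 𝕜 t f := by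
  intro hconv
  obtain ⟨x, hx, y, hy, hxy⟩ := hs
  have h2 : (0 : 𝕜) < 1 / 2 := one_half_pos
  exact (hf.2 hx hy hxy h2 h2 (add_halves 1)).not_ge
    (hconv.2 (hst hx) (hst hy) h2.le h2.le (add_halves 1))

theorem hasDerivAt_exp_mul (β t : ℝ) :
    HasDerivAt (fun t => exp (β * t)) (exp (β * t) * β) t := by
  simpa using ((hasDerivAt_id t).const_mul β).exp

section LogExpAffine

variable {a c β : ℝ}

theorem hasDerivAt_log_mul_exp_add (ha : 0 ≤ a) (hc : 0 < c) (t : ℝ) :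
    HasDerivAt (fun t => log (a * exp (β * t) + c))
      (β * a * exp (β * t) / (a * exp (β * t) + c)) t := by
  have hexp := hasDerivAt_exp_mul β t
  refine (((hexp.const_mul a).add_const c).log (by positivity)).congr_deriv ?_
  ring

theorem hasDerivAt_mul_exp_div_mul_exp_add (ha : 0 ≤ a) (hc : 0 < c) (t : ℝ) :
    HasDerivAt (fun t => β * a * exp (β * t) / (a * exp (β * t) + c))
      (β ^ 2 * a * c * exp (β * t) / (a * exp (β * t) + c) ^ 2) t := by
  have hexp := hasDerivAt_exp_mul β t
  refine ((hexp.const_mul (β * a)).div ((hexp.const_mul a).add_const c)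
    (by positivity)).congr_deriv ?_
  field_simp
  ring

theorem iterate_deriv_two_log_mul_exp_add_sub (ha : 0 ≤ a) (hc : 0 < c) {a' c' : ℝ}
    (ha' : 0 ≤ a') (hc' : 0 < c') (t : ℝ) :
    deriv^[2] (fun t => log (a * exp (β * t) + c) - log (a' * exp (β * t) + c')) t =
      β ^ 2 * a * c * exp (β * t) / (a * exp (β * t) + c) ^ 2
        - β ^ 2 * a' * c' * exp (β * t) / (a' * exp (β * t) + c') ^ 2 := by
  have h1 : deriv (fun t => log (a * exp (β * t) + c) - log (a' * exp (β * t) + c')) =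
      fun t => β * a * exp (β * t) / (a * exp (β * t) + c)
        - β * a' * exp (β * t) / (a' * exp (β * t) + c') := funext fun t =>
    ((hasDerivAt_log_mul_exp_add ha hc t).sub (hasDerivAt_log_mul_exp_add ha' hc' t)).deriv
  rw [Function.iterate_succ_apply', Function.iterate_one, h1]
  exact ((hasDerivAt_mul_exp_div_mul_exp_add ha hc t).sub
    (hasDerivAt_mul_exp_div_mul_exp_add ha' hc' t)).deriv

end LogExpAffine

section RectifiedLaw

variable {B E D β : ℝ}

theorem log_div_add_exp_add_eq (hB : 0 < B) (hE : 0 < E) (hD : 0 < D) (β : ℝ) :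
    (fun x => log (B / (D + exp (β * x)) + E)) =
      fun x => log (E * exp (β * x) + (B + E * D)) - log (1 * exp (β * x) + D) := by
  funext x
  have hD' : 0 < D + exp (β * x) := by positivity
  rw [← log_div (by positivity) (by positivity)]
  congr 1
  field_simp
  ring

theorem iterate_deriv_two_log_div_add_exp_add (hB : 0 < B) (hE : 0 < E) (hD : 0 < D) (x : ℝ) :
    deriv^[2] (fun x => log (B / (D + exp (β * x)) + E)) x =
      β ^ 2 * B * E * exp (β * x) / ((E * exp (β * x) + (B + E * D)) ^ 2 * (exp (β * x) + D) ^ 2)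
        * (exp (β * x) ^ 2 - (D ^ 2 + B * D / E)) := by
  rw [log_div_add_exp_add_eq hB hE hD, iterate_deriv_two_log_mul_exp_add_sub (by positivity)
    (by positivity) zero_le_one hD]
  have h1 : 0 < E * exp (β * x) + (B + E * D) := by positivity
  have h2 : 0 < exp (β * x) + D := by positivity
  field_simp
  ring

theorem continuous_log_div_add_exp_add (hB : 0 < B) (hE : 0 < E) (hD : 0 < D) :
    Continuous fun x => log (B / (D + exp (β * x)) + E) := by
  rw [log_div_add_exp_add_eq hB hE hD]
  exact continuous_iff_continuousAt.2 fun x =>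
    ((hasDerivAt_log_mul_exp_add hE.le (by positivity) x).sub
      (hasDerivAt_log_mul_exp_add zero_le_one hD x)).continuousAt

end RectifiedLaw

theorem sq_exp_mul_sub_pos_iff {K β : ℝ} (hK : 0 < K) (hβ : 0 < β) (x : ℝ) :
    0 < exp (β * x) ^ 2 - K ↔ log K / (2 * β) < x := by
  rw [sub_pos, sq, ← exp_add, ← log_lt_iff_lt_exp hK, div_lt_iff₀ (by positivity)]
  constructor <;> intro h <;> linarith

theorem sq_exp_mul_sub_neg_iff {K β : ℝ} (hK : 0 < K) (hβ : 0 < β) (x : ℝ) :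
    exp (β * x) ^ 2 - K < 0 ↔ x < log K / (2 * β) := by
  rw [sub_neg, sq, ← exp_add, ← lt_log_iff_exp_lt hK, lt_div_iff₀ (by positivity)]
  constructor <;> intro h <;> linarith

theorem stmt_17 (B E Dl β : ℝ) (hB : 0 < B) (hE : 0 < E) (hDl : 0 < Dl) (hβ : 0 < β)
    (hcond : 1 < Dl ^ 2 + B * Dl / E) :
    ∃ x₀ : ℝ, 0 < x₀ ∧
      StrictConcaveOn ℝ (Set.Ioo 0 x₀)
        (fun x : ℝ => Real.log (B / (Dl + Real.exp (β * x)) + E)) ∧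
      StrictConvexOn ℝ (Set.Ioi x₀)
        (fun x : ℝ => Real.log (B / (Dl + Real.exp (β * x)) + E)) ∧
      ¬ ConvexOn ℝ (Set.Ioi 0)
        (fun x : ℝ => Real.log (B / (Dl + Real.exp (β * x)) + E)) := by
  set K := Dl ^ 2 + B * Dl / E
  have hK : 0 < K := by positivity
  have hx₀ : 0 < log K / (2 * β) := div_pos (log_pos hcond) (by positivity)
  have hcont := continuous_log_div_add_exp_add (β := β) hB hE hDl
  have hfactor (x : ℝ) : 0 < β ^ 2 * B * E * exp (β * x) /
      ((E * exp (β * x) + (B + E * Dl)) ^ 2 * (exp (β * x) + Dl) ^ 2) := by positivity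
  have hconcave : StrictConcaveOn ℝ (Ioo 0 (log K / (2 * β)))
      (fun x => log (B / (Dl + exp (β * x)) + E)) := by
    refine strictConcaveOn_of_deriv2_neg (convex_Ioo _ _) hcont.continuousOn fun x hx => ?_
    rw [interior_Ioo] at hx
    rw [iterate_deriv_two_log_div_add_exp_add hB hE hDl]
    exact mul_neg_of_pos_of_neg (hfactor x) ((sq_exp_mul_sub_neg_iff hK hβ x).2 hx.2)
  refine ⟨log K / (2 * β), hx₀, hconcave, ?_,
    hconcave.not_convexOn (Ioo_infinite hx₀).nontrivial Ioo_subset_Ioi_self⟩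
  refine strictConvexOn_of_deriv2_pos (convex_Ioi _) hcont.continuousOn fun x hx => ?_
  rw [interior_Ioi] at hx
  rw [iterate_deriv_two_log_div_add_exp_add hB hE hDl]
  exact mul_pos (hfactor x) ((sq_exp_mul_sub_pos_iff hK hβ x).2 hx)
end
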